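/- arXiv:1503.08451 — 3 statements merged into one kernel-verified Lean document; each statement's English description precedes it below -/
import Mathlib

section
/- Let S be a nonempty strong-inductive cubical set in the n-dimensional cube B_n. Then the homology of the chain complex (S, ∂), graded by dimension, satisfies H_0(S) ≅ ℤ/2ℤ and H_i(S) = 0 for all i > 0. -/
/-- A face of the `n`-dimensional cube: a function `Fin n → Fin 3`,
where `0` stands for `0`, `1` stands for `*`, and `2` stands for `1`. -/
abbrev Face (n : ℕ) := Fin n → Fin 3

/-- The dimension of a face: the number of indices mapped to `*` (encoded as `1 : Fin 3`). -/
def fdim {n : ℕ} (f : Face n) : ℕ := (Finset.univ.filter fun i => f i = 1).card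

/-- `Adj f g` : the face `g` appears in the boundary `∂ f`, i.e. `g` is obtained from `f`
by replacing a single occurrence of `*` by `0` or by `1`. -/
def Adj {n : ℕ} (f g : Face n) : Prop :=
  ∃ i, f i = 1 ∧ g i ≠ 1 ∧ ∀ j, j ≠ i → g j = f j

instance {n : ℕ} (f g : Face n) : Decidable (Adj f g) := by unfold Adj; infer_instance

/-- A cubical set is inductive if it is downward closed for the pointwise order
induced by `0 < * < 1`. -/
def Inductive {n : ℕ} (S : Finset (Face n)) : Prop :=
  ∀ f ∈ S, ∀ f' : Face n, (∀ i, f' i ≤ f i) → f' ∈ S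

/-- Strong-inductive: inductive, and every maximal face has dimension `0`. -/
def StrongInductive {n : ℕ} (S : Finset (Face n)) : Prop :=
  Inductive S ∧ ∀ f ∈ S, (∀ g ∈ S, (∀ i, f i ≤ g i) → g = f) → fdim f = 0

/-- The degree-`k` part of the chain complex of the cubical set `S` over `ℤ/2ℤ`:
the `ℤ/2ℤ`-vector space with basis the faces of `S` of dimension `k`. -/
abbrev Chain {n : ℕ} (S : Finset (Face n)) (k : ℕ) : Type :=
  {f : Face n // f ∈ S ∧ fdim f = k} → ZMod 2

/-- The boundary map `∂ : Chain S k → Chain S (k-1)`: a basis face is sent to the sum of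
the faces appearing in its boundary. -/
noncomputable def bd {n : ℕ} (S : Finset (Face n)) (k : ℕ) :
    Chain S k →ₗ[ZMod 2] Chain S (k - 1) :=
  Matrix.mulVecLin
    (Matrix.of fun (g : {f : Face n // f ∈ S ∧ fdim f = k - 1})
      (f : {f : Face n // f ∈ S ∧ fdim f = k}) => if Adj f.1 g.1 then (1 : ZMod 2) else 0)

/-- The degree-`k` homology of the chain complex `(S, ∂)`:
`ker ∂_k` modulo (the pullback of) `im ∂_{k+1}`. -/
abbrev CubeHomology {n : ℕ} (S : Finset (Face n)) (k : ℕ) : Type :=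
  LinearMap.ker (bd S k) ⧸
    Submodule.comap (LinearMap.ker (bd S k)).subtype (LinearMap.range (bd S (k + 1)))

/-!
Write `r_i` for the projection of the cube onto its facet `x_i = 0` (a face with `1` at `i` goes
to the opposite face, one with `*` at `i` goes to `0`) and `h_i` for the map sending a face with
`1` at `i` to the face with `*` there. Over `ℤ/2ℤ`, `∂h_i + h_i∂ = id + r_i` and `r_i` commutes
with `∂`, so composing over all coordinates gives `H` with `∂H + H∂ = id + R`, where `R` retracts
the cube onto its origin. Downward closure keeps the images of `r_i` and `h_i` inside `S`, and
strong inductivity (every face of `S` lies below a vertex of `S`) does the same for `∂`. Hence a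
cycle `z` of `S` is a boundary iff `R z = 0`: this always holds in positive degree, and in degree
`0` the coefficient of the origin in `R z` identifies `H₀(S)` with `ℤ/2ℤ`.
-/

open Function

section Faces

variable {n : ℕ}

lemma fdim_eq_zero_iff (f : Face n) : fdim f = 0 ↔ ∀ i, f i ≠ 1 := by
  simp [fdim, Finset.filter_eq_empty_iff]

lemma fdim_update_one {f : Face n} {i : Fin n} (h : f i ≠ 1) :
    fdim (update f i 1) = fdim f + 1 := by
  have : Finset.univ.filter (fun j => update f i 1 j = 1)
      = insert i (Finset.univ.filter fun j => f j = 1) := by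
    ext j
    obtain rfl | hj := eq_or_ne j i <;> simp [update_of_ne, *]
  rw [fdim, this, Finset.card_insert_of_notMem (by simp [h]), fdim]

lemma fdim_update_of_ne_one {f : Face n} {i : Fin n} {c : Fin 3} (hf : f i ≠ 1) (hc : c ≠ 1) :
    fdim (update f i c) = fdim f := by
  have h := fdim_update_one (f := update f i c) (i := i) (by simpa using hc)
  rw [update_idem, fdim_update_one hf] at h
  omega

def cells (S : Finset (Face n)) (k : ℕ) : Set (Face n) := {f | f ∈ S ∧ fdim f = k}

variable {S : Finset (Face n)}

lemma Inductive.update_mem (hS : Inductive S) {f : Face n} (hf : f ∈ S) {i : Fin n} {c : Fin 3}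
    (hc : c ≤ f i) : update f i c ∈ S := by
  refine hS f hf _ fun j => ?_
  obtain rfl | hj := eq_or_ne j i <;> simp [update_of_ne, *]

lemma Inductive.zero_mem (hS : Inductive S) (hne : S.Nonempty) : (0 : Face n) ∈ S :=
  hne.elim fun f hf => hS f hf 0 fun _ => Fin.zero_le _

/-- A maximal face of `S` above `f` is a vertex, so it carries `2` (the paper's `1`) wherever
`f` carries `*`. -/
lemma StrongInductive.update_two_mem (hS : StrongInductive S) {f : Face n} (hf : f ∈ S)
    {i : Fin n} (h : f i = 1) : update f i 2 ∈ S := by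
  obtain ⟨m, hfm, hmS, hmax⟩ := S.exists_le_maximal hf
  have hm : fdim m = 0 := hS.2 m hmS fun g hg hmg => le_antisymm (hmax hg hmg) hmg
  have hmi : m i = 2 := by
    have h1 : 1 ≤ m i := h ▸ hfm i
    have h2 := (fdim_eq_zero_iff m).1 hm i
    omega
  exact hS.1 m hmS _ fun j => by
    obtain rfl | hj := eq_or_ne j i <;> simp [update_of_ne, hfm _, *]

end Faces

/-- Chains of the whole cube, stored as coefficient functions. The operators below are hence
transposes of the face maps: `partialBd j x g` is the coefficient of `g` in `∂_j x`, which only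
the face `update g j 1` contributes. -/
abbrev CubeChain (n : ℕ) := Face n → ZMod 2

namespace CubeChain

variable {n : ℕ}

@[simps]
noncomputable def partialBd (j : Fin n) : Module.End (ZMod 2) (CubeChain n) where
  toFun x g := if g j ≠ 1 then x (update g j 1) else 0
  map_add' x y := by ext g; simp only [Pi.add_apply]; split_ifs <;> simp
  map_smul' c x := by ext g; simp only [Pi.smul_apply]; split_ifs <;> simp

@[simps]
noncomputable def homotopyStep (i : Fin n) : Module.End (ZMod 2) (CubeChain n) where
  toFun x g := if g i = 1 then x (update g i 2) else 0
  map_add' x y := by ext g; simp only [Pi.add_apply]; split_ifs <;> simp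
  map_smul' c x := by ext g; simp only [Pi.smul_apply]; split_ifs <;> simp

@[simps]
noncomputable def retractStep (i : Fin n) : Module.End (ZMod 2) (CubeChain n) where
  toFun x g := if g i = 0 then x g + x (update g i 2) else 0
  map_add' x y := by ext g; simp only [Pi.add_apply]; split_ifs <;> simp [add_add_add_comm]
  map_smul' c x := by ext g; simp only [Pi.smul_apply]; split_ifs <;> simp [mul_add]

lemma partialBd_mul_homotopyStep_add (i : Fin n) :
    partialBd i * homotopyStep i + homotopyStep i * partialBd i = 1 + retractStep i := by
  refine LinearMap.ext fun x => funext fun g => ?_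
  simp only [LinearMap.add_apply, Module.End.mul_apply, Module.End.one_apply, Pi.add_apply,
    partialBd_apply, homotopyStep_apply, retractStep_apply, update_self, update_idem]
  rcases (by omega : g i = 0 ∨ g i = 1 ∨ g i = 2) with h | h | h
  · simp [h, ← add_assoc, ZModModule.add_self]
  · simp [h, (update_eq_self_iff (f := g)).2 h.symm]
  · simp [h, (update_eq_self_iff (f := g)).2 h.symm]

lemma partialBd_comm_homotopyStep {i j : Fin n} (hij : i ≠ j) :
    Commute (partialBd j) (homotopyStep i) := by
  refine LinearMap.ext fun x => funext fun g => ?_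
  simp only [Module.End.mul_apply, partialBd_apply, homotopyStep_apply,
    update_of_ne hij, update_of_ne hij.symm, update_comm hij]
  split_ifs <;> rfl

lemma partialBd_comm_retractStep {i j : Fin n} (hij : i ≠ j) :
    Commute (partialBd j) (retractStep i) := by
  refine LinearMap.ext fun x => funext fun g => ?_
  simp only [Module.End.mul_apply, partialBd_apply, retractStep_apply,
    update_of_ne hij, update_of_ne hij.symm, update_comm hij]
  split_ifs <;> rfl

lemma partialBd_mul_retractStep (i : Fin n) : partialBd i * retractStep i = 0 := by
  refine LinearMap.ext fun x => funext fun g => ?_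
  simp

lemma retractStep_mul_partialBd (i : Fin n) : retractStep i * partialBd i = 0 := by
  refine LinearMap.ext fun x => funext fun g => ?_
  by_cases h : g i = 0 <;> simp [h, ZModModule.add_self]

noncomputable def cubeBd : Module.End (ZMod 2) (CubeChain n) := ∑ j, partialBd j

lemma cubeBd_mul_homotopyStep_add (i : Fin n) :
    cubeBd * homotopyStep i + homotopyStep i * cubeBd = 1 + retractStep i := by
  rw [cubeBd, Finset.sum_mul, Finset.mul_sum, ← Finset.sum_add_distrib,
    Finset.sum_eq_single i, partialBd_mul_homotopyStep_add]
  · intro j _ hji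
    rw [(partialBd_comm_homotopyStep hji.symm).eq, ZModModule.add_self]
  · simp

lemma commute_retractStep_cubeBd (i : Fin n) : Commute (retractStep i) cubeBd := by
  refine Commute.sum_right _ _ _ fun j _ => ?_
  obtain rfl | hij := eq_or_ne i j
  · rw [Commute, SemiconjBy, partialBd_mul_retractStep, retractStep_mul_partialBd]
  · exact (partialBd_comm_retractStep hij).symm

noncomputable def retraction (l : List (Fin n)) : Module.End (ZMod 2) (CubeChain n) :=
  (l.map retractStep).prod

noncomputable def homotopy : List (Fin n) → Module.End (ZMod 2) (CubeChain n)
  | [] => 0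
  | i :: l => homotopyStep i * retraction l + homotopy l

lemma commute_retraction_cubeBd (l : List (Fin n)) : Commute (retraction l) cubeBd :=
  Commute.list_prod_left _ _ <| by simpa using fun i _ => commute_retractStep_cubeBd i

lemma cubeBd_mul_homotopy_add (l : List (Fin n)) :
    cubeBd * homotopy l + homotopy l * cubeBd = 1 + retraction l := by
  induction l with
  | nil => simp [homotopy, retraction, ZModModule.add_self]
  | cons i l ih =>
    have hR := (commute_retraction_cubeBd l).eq
    calc cubeBd * homotopy (i :: l) + homotopy (i :: l) * cubeBd
        = (cubeBd * homotopyStep i + homotopyStep i * cubeBd) * retraction l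
            + (cubeBd * homotopy l + homotopy l * cubeBd) := by
          simp only [homotopy, mul_add, add_mul, mul_assoc, hR]; abel
      _ = 1 + retractStep i * retraction l + (retraction l + retraction l) := by
          rw [cubeBd_mul_homotopyStep_add, ih]; noncomm_ring
      _ = 1 + retraction (i :: l) := by
          rw [ZModModule.add_self, add_zero]; rfl

lemma cubeBd_apply (x : CubeChain n) (g : Face n) :
    cubeBd x g = ∑ j, if g j ≠ 1 then x (update g j 1) else 0 := by
  simp [cubeBd]

lemma exists_of_cubeBd_apply_ne_zero {x : CubeChain n} {g : Face n} (h : cubeBd x g ≠ 0) :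
    ∃ i, g i ≠ 1 ∧ x (update g i 1) ≠ 0 := by
  obtain ⟨i, -, hi⟩ := Finset.exists_ne_zero_of_sum_ne_zero (cubeBd_apply x g ▸ h)
  exact ⟨i, by_contra fun hgi => hi (if_neg hgi), fun hx => hi (by simp [hx])⟩

lemma retractStep_apply_ne_zero {i : Fin n} {x : CubeChain n} {g : Face n}
    (h : retractStep i x g ≠ 0) : g i = 0 ∧ (x g ≠ 0 ∨ x (update g i 2) ≠ 0) := by
  rw [retractStep_apply] at h
  split_ifs at h with hg
  · exact ⟨hg, not_and_or.1 fun hx => h (by rw [hx.1, hx.2, add_zero])⟩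
  · exact (h rfl).elim

lemma homotopyStep_apply_ne_zero {i : Fin n} {x : CubeChain n} {g : Face n}
    (h : homotopyStep i x g ≠ 0) : g i = 1 ∧ x (update g i 2) ≠ 0 := by
  rw [homotopyStep_apply] at h
  split_ifs at h with hg
  · exact ⟨hg, h⟩
  · exact (h rfl).elim

lemma retraction_cons (i : Fin n) (l : List (Fin n)) :
    retraction (i :: l) = retractStep i * retraction l := rfl

lemma support_retraction_subset_setOf (l : List (Fin n)) (x : CubeChain n) :
    support (retraction l x) ⊆ {g | ∀ i ∈ l, g i = 0} := by
  induction l generalizing x with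
  | nil => simp
  | cons i l ih =>
    intro g hg
    obtain ⟨hgi, hx⟩ := retractStep_apply_ne_zero hg
    intro j hj
    obtain rfl | hji := eq_or_ne j i
    · exact hgi
    obtain hx | hx := hx
    · exact ih x hx j (List.mem_of_ne_of_mem hji hj)
    · simpa [update_of_ne hji] using ih x hx j (List.mem_of_ne_of_mem hji hj)

lemma support_retraction_finRange_subset (x : CubeChain n) :
    support (retraction (List.finRange n) x) ⊆ {0} :=
  fun _ hg => funext fun i => support_retraction_subset_setOf _ x hg i (List.mem_finRange i)

lemma cubeBd_eq_zero_of_support_subset {y : CubeChain n} (hy : support y ⊆ {0}) :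
    cubeBd y = 0 := by
  funext g
  by_contra h
  obtain ⟨i, -, hi⟩ := exists_of_cubeBd_apply_ne_zero h
  simpa using congrFun (hy hi) i

lemma retraction_eq_self_of_support_subset {y : CubeChain n} (hy : support y ⊆ {0})
    (l : List (Fin n)) : retraction l y = y := by
  induction l with
  | nil => rfl
  | cons i l ih =>
    rw [retraction_cons, Module.End.mul_apply, ih]
    funext g
    have h2 : y (update g i 2) = 0 := by_contra fun h => by simpa using congrFun (hy h) i
    by_cases hg : g i = 0
    · simp [hg, h2]
    · have : y g = 0 := by_contra fun h => hg (congrFun (hy h) i)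
      simp [hg, this]

variable {S : Finset (Face n)} {k : ℕ} {x : CubeChain n}

lemma support_cubeBd_subset (hS : StrongInductive S) (hx : support x ⊆ cells S k) :
    support (cubeBd x) ⊆ cells S (k - 1) := by
  intro g hg
  obtain ⟨i, hgi, hx'⟩ := exists_of_cubeBd_apply_ne_zero hg
  obtain ⟨hmem, hdim⟩ := hx hx'
  rw [fdim_update_one hgi] at hdim
  refine ⟨?_, by omega⟩
  rw [show g = update (update g i 1) i (g i) by simp]
  rcases (by omega : g i = 0 ∨ g i = 2) with h | h
  · exact hS.1.update_mem hmem (by simp [h])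
  · rw [h]; exact hS.update_two_mem hmem (by simp)

lemma support_retractStep_subset (hS : Inductive S) (hx : support x ⊆ cells S k) (i : Fin n) :
    support (retractStep i x) ⊆ cells S k := by
  intro g hg
  obtain ⟨hgi, hx' | hx'⟩ := retractStep_apply_ne_zero hg
  · exact hx hx'
  obtain ⟨hmem, hdim⟩ := hx hx'
  rw [show g = update (update g i 2) i (g i) by simp]
  refine ⟨hS.update_mem hmem (by simp [hgi]), ?_⟩
  rw [fdim_update_of_ne_one (by simp) (by simp [hgi]), hdim]

lemma support_homotopyStep_subset (hS : Inductive S) (hx : support x ⊆ cells S k) (i : Fin n) :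
    support (homotopyStep i x) ⊆ cells S (k + 1) := by
  intro g hg
  obtain ⟨hgi, hx'⟩ := homotopyStep_apply_ne_zero hg
  obtain ⟨hmem, hdim⟩ := hx hx'
  rw [show g = update (update g i 2) i 1 by simp [← hgi]]
  exact ⟨hS.update_mem hmem (by simp), by rw [fdim_update_one (by simp), hdim]⟩

lemma support_retraction_subset_cells (hS : Inductive S) (hx : support x ⊆ cells S k)
    (l : List (Fin n)) : support (retraction l x) ⊆ cells S k := by
  induction l with
  | nil => exact hx
  | cons i l ih => exact support_retractStep_subset hS ih i

lemma support_homotopy_subset_cells (hS : Inductive S) (hx : support x ⊆ cells S k)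
    (l : List (Fin n)) : support (homotopy l x) ⊆ cells S (k + 1) := by
  induction l with
  | nil => simp [homotopy]
  | cons i l ih =>
    refine (support_add _ _).trans (Set.union_subset ?_ ih)
    exact support_homotopyStep_subset hS (support_retraction_subset_cells hS hx l) i

variable (S k) in
noncomputable def ofChain : Chain S k →ₗ[ZMod 2] CubeChain n :=
  ExtendByZero.linearMap (ZMod 2) Subtype.val

lemma ofChain_apply_coe (z : Chain S k) (f : {f : Face n // f ∈ S ∧ fdim f = k}) :
    ofChain S k z f = z f :=
  Subtype.val_injective.extend_apply z (0 : CubeChain n) f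

lemma ofChain_apply_of_notMem (z : Chain S k) {g : Face n} (hg : g ∉ cells S k) :
    ofChain S k z g = 0 :=
  extend_apply' z (0 : CubeChain n) g fun ⟨f, hf⟩ => hg (hf ▸ f.2)

lemma support_ofChain_subset (z : Chain S k) : support (ofChain S k z) ⊆ cells S k :=
  fun _ hg => by_contra fun h => hg (ofChain_apply_of_notMem z h)

lemma ofChain_injective : Injective (ofChain S k) :=
  extend_injective Subtype.val_injective (0 : CubeChain n)

lemma ofChain_restrict (hx : support x ⊆ cells S k) :
    ofChain S k (fun f => x f.1) = x := by
  funext g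
  by_cases hg : g ∈ cells S k
  · exact ofChain_apply_coe _ ⟨g, hg⟩
  · rw [ofChain_apply_of_notMem _ hg, eq_comm, ← notMem_support]
    exact fun h => hg (hx h)

lemma cubeBd_apply_eq_sum_adj (x : CubeChain n) (g : Face n) :
    cubeBd x g = ∑ f, if Adj f g then x f else 0 := by
  classical
  have hadj : Finset.univ.filter (Adj · g)
      = (Finset.univ.filter (g · ≠ 1)).image (update g · 1) := by
    ext f
    simp only [Finset.mem_filter, Finset.mem_image, Finset.mem_univ, true_and]
    constructor
    · rintro ⟨i, hfi, hgi, hfg⟩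
      refine ⟨i, hgi, funext fun j => ?_⟩
      obtain rfl | hj := eq_or_ne j i <;> simp [update_of_ne, *]
    · rintro ⟨i, hgi, rfl⟩
      exact ⟨i, by simp, hgi, fun j hj => (update_of_ne hj _ _).symm⟩
  have hinj : Set.InjOn (update g · 1) (Finset.univ.filter (g · ≠ 1) : Set (Fin n)) :=
    fun i hi j _ hij => by_contra fun hne =>
      (by simpa using hi : g i ≠ 1) (by simpa [update_of_ne hne] using (congrFun hij i).symm)
  rw [← Finset.sum_filter, hadj, Finset.sum_image hinj, Finset.sum_filter, cubeBd_apply]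

lemma ofChain_bd (hS : StrongInductive S) (z : Chain S k) :
    ofChain S (k - 1) (bd S k z) = cubeBd (ofChain S k z) := by
  classical
  funext g
  by_cases hg : g ∈ S ∧ fdim g = k - 1
  · rw [ofChain_apply_coe _ ⟨g, hg⟩, cubeBd_apply_eq_sum_adj,
      ← Fintype.sum_subtype_add_sum_subtype (fun f => f ∈ S ∧ fdim f = k)]
    have hout (f : {f : Face n // ¬(f ∈ S ∧ fdim f = k)}) : ofChain S k z f = 0 :=
      ofChain_apply_of_notMem z f.2
    simp [bd, Matrix.mulVec, dotProduct, ofChain_apply_coe, hout]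
  · rw [ofChain_apply_of_notMem _ hg, eq_comm, ← notMem_support]
    exact fun h => hg (support_cubeBd_subset hS (support_ofChain_subset z) h)

lemma mem_range_bd_iff (hS : StrongInductive S) {z : Chain S k} (hz : bd S k z = 0) :
    z ∈ LinearMap.range (bd S (k + 1)) ↔ retraction (List.finRange n) (ofChain S k z) = 0 := by
  constructor
  · rintro ⟨w, rfl⟩
    rw [show ofChain S k (bd S (k + 1) w) = cubeBd (ofChain S (k + 1) w) from ofChain_bd hS w,
      ← Module.End.mul_apply, (commute_retraction_cubeBd _).eq, Module.End.mul_apply]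
    exact cubeBd_eq_zero_of_support_subset (support_retraction_finRange_subset _)
  · intro hR
    set x := ofChain S k z
    have hx : cubeBd x = 0 := by rw [← ofChain_bd hS, hz, map_zero]
    have hxH : cubeBd (homotopy (List.finRange n) x) = x := by
      simpa [hx, hR] using LinearMap.congr_fun (cubeBd_mul_homotopy_add (List.finRange n)) x
    have hH := support_homotopy_subset_cells hS.1 (support_ofChain_subset z) (List.finRange n)
    refine ⟨fun f => homotopy (List.finRange n) x f, ofChain_injective ?_⟩
    rw [ofChain_bd hS, ofChain_restrict hH, hxH]
    rfl

lemma subsingleton_cubeHomology (hS : StrongInductive S) (hk : 0 < k) :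
    Subsingleton (CubeHomology S k) := by
  rw [Submodule.Quotient.subsingleton_iff, eq_top_iff]
  rintro z -
  refine (mem_range_bd_iff hS (LinearMap.mem_ker.1 z.2)).2 (funext fun g => by_contra fun hg => ?_)
  have h0 : g = 0 := support_retraction_finRange_subset _ hg
  have hk' := (support_retraction_subset_cells hS.1 (support_ofChain_subset z.1) _ hg).2
  simp [h0, fdim] at hk'
  omega

lemma bd_zero_eq_zero (S : Finset (Face n)) : bd S 0 = 0 := by
  refine LinearMap.ext fun z => funext fun g => Finset.sum_eq_zero fun f _ => ?_
  have : ¬Adj f.1 g.1 := fun ⟨i, hi, _⟩ => (fdim_eq_zero_iff f.1).1 f.2.2 i hi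
  simp [this]

variable (S) in
noncomputable def originCoeff : LinearMap.ker (bd S 0) →ₗ[ZMod 2] ZMod 2 :=
  LinearMap.proj 0 ∘ₗ retraction (List.finRange n) ∘ₗ ofChain S 0 ∘ₗ (LinearMap.ker _).subtype

lemma ker_originCoeff (hS : StrongInductive S) :
    LinearMap.ker (originCoeff S)
      = (LinearMap.range (bd S 1)).comap (LinearMap.ker (bd S 0)).subtype := by
  ext z
  refine Iff.trans ?_ (mem_range_bd_iff hS (LinearMap.mem_ker.1 z.2)).symm
  have hsupp := support_retraction_finRange_subset (ofChain S 0 z)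
  refine ⟨fun h => funext fun g => by_contra fun hg => ?_, fun h => by simp [originCoeff, h]⟩
  exact hg (Set.mem_singleton_iff.1 (hsupp hg) ▸ h)

lemma originCoeff_surjective (hS : StrongInductive S) (hne : S.Nonempty) :
    Surjective (originCoeff S) := by
  classical
  have h0 : (0 : Face n) ∈ S ∧ fdim (0 : Face n) = 0 := ⟨hS.1.zero_mem hne, by simp [fdim]⟩
  intro c
  let z : Chain S 0 := Pi.single ⟨0, h0⟩ c
  have hz : support (ofChain S 0 z) ⊆ {0} := fun g hg => by
    have hgS := support_ofChain_subset z hg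
    rw [mem_support, show ofChain S 0 z g = z ⟨g, hgS⟩ from ofChain_apply_coe z ⟨g, hgS⟩] at hg
    simp only [z, Pi.single_apply, Subtype.ext_iff] at hg
    exact by_contra fun hg0 => hg (if_neg hg0)
  refine ⟨⟨z, by simp [bd_zero_eq_zero]⟩, ?_⟩
  simp [originCoeff, retraction_eq_self_of_support_subset hz, ofChain_apply_coe z ⟨0, h0⟩, z]

variable (S) in
noncomputable def cubeHomologyZeroEquiv (hS : StrongInductive S) (hne : S.Nonempty) :
    CubeHomology S 0 ≃ₗ[ZMod 2] ZMod 2 :=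
  (Submodule.quotEquivOfEq _ _ (ker_originCoeff hS).symm).trans
    ((originCoeff S).quotKerEquivOfSurjective (originCoeff_surjective hS hne))

end CubeChain

open CubeChain in
/-- For a nonempty strong-inductive cubical set `S ⊆ B_n`, the homology of `(S, ∂)`
satisfies `H₀(S) ≅ ℤ/2ℤ` and `H_i(S) = 0` for `i > 0`. -/
theorem statement0 (n : ℕ) (S : Finset (Face n)) (hne : S.Nonempty)
    (hS : StrongInductive S) :
    Nonempty (CubeHomology S 0 ≃ₗ[ZMod 2] ZMod 2) ∧
      ∀ i : ℕ, 0 < i → Subsingleton (CubeHomology S i) :=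
  ⟨⟨cubeHomologyZeroEquiv S hS hne⟩, fun _ hi => subsingleton_cubeHomology hS hi⟩
end

section
/- Let S be a strong-inductive cubical set in B_n, R a unital ring, and (C,d) an S-shaped pre-complex over R. Define γ(s) ∈ ℤ/2ℤ for each square s of S by γ(s) = 1 if s commutes and γ(s) = 0 otherwise. Then γ is a 2-cocycle of the dual complex of S: for every cube c of S, the sum over the six square faces s of c of γ(s) equals 0 in ℤ/2ℤ. -/
/-- Replace every `*` (encoded `1`) of a face by the value `a`.
For an edge `e`, `vset e 0` and `vset e 2` are its two endpoint vertices `e₀` and `e₁`. -/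
def vset {n : ℕ} (f : Face n) (a : Fin 3) : Face n := fun l => if f l = 1 then a else f l

/-- `corner0 s i a` : replace every `*` of `s` by `0`, then set coordinate `i` to `a`. -/
def corner0 {n : ℕ} (s : Face n) (i : Fin n) (a : Fin 3) : Face n :=
  Function.update (vset s 0) i a

/-- `corner2 s i a` : replace every `*` of `s` by `1` (encoded `2`), then set coordinate
`i` to `a`. -/
def corner2 {n : ℕ} (s : Face n) (i : Fin n) (a : Fin 3) : Face n :=
  Function.update (vset s 2) i a

/-- An `S`-shaped space over a unital ring `R`: an `R`-module `C v` for each vertex `v`,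
and a linear map `d u w : C u → C w` for each pair of vertices. Only the values of `d` on
the pairs `(e₀, e₁)` coming from edges `e` of `S` are relevant. -/
structure SShape (R : Type*) [Ring R] (n : ℕ) where
  C : Face n → Type*
  [acg : ∀ f, AddCommGroup (C f)]
  [mod : ∀ f, Module R (C f)]
  d : ∀ u w : Face n, C u →ₗ[R] C w

attribute [instance] SShape.acg SShape.mod

/-- Multiply a linear map by the sign `(−1)^a` for `a : ℤ/2ℤ`. -/
def signed {R : Type*} [Ring R] (a : ZMod 2) {M N : Type*} [AddCommGroup M] [AddCommGroup N]
    [Module R M] [Module R N] (f : M →ₗ[R] N) : M →ₗ[R] N :=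
  if a = 0 then f else -f

/-- For a square `s` with `*` at the positions `i` and `j`, the composition
`C_{s[i→0,j→0]} → C_{s[i→1,j→0]} → C_{s[i→1,j→1]}` going first along direction `i`. -/
def sqComp {R : Type*} [Ring R] {n : ℕ} (X : SShape R n) (s : Face n) (i : Fin n) :
    X.C (vset s 0) →ₗ[R] X.C (vset s 2) :=
  (X.d (corner0 s i 2) (vset s 2)).comp (X.d (vset s 0) (corner0 s i 2))

/-- The same composition for the `δ`-deformation `C^δ`: each leg is multiplied by the sign
`(−1)^{δ(e)}` of the corresponding boundary edge `e` of the square `s` (the edge of the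
first leg is `corner0 s i 1`, the edge of the second leg is `corner2 s j 1`). -/
def sqCompSigned {R : Type*} [Ring R] {n : ℕ} (X : SShape R n) (δ : Face n → ZMod 2)
    (s : Face n) (i j : Fin n) : X.C (vset s 0) →ₗ[R] X.C (vset s 2) :=
  (signed (δ (corner2 s j 1)) (X.d (corner0 s i 2) (vset s 2))).comp
    (signed (δ (corner0 s i 1)) (X.d (vset s 0) (corner0 s i 2)))

/-- `(u, w)` is the pair of endpoints of an edge of `S`. -/
def EdgePair {n : ℕ} (S : Finset (Face n)) (u w : Face n) : Prop :=
  ∃ e ∈ S, fdim e = 1 ∧ vset e 0 = u ∧ vset e 2 = w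

/-- An `S`-shaped space is an `S`-shaped pre-complex if every square of `S` commutes or
anticommutes, and twice any composition of three maps `d` along composable edges of `S`
is nonzero. -/
def IsPreComplex {R : Type*} [Ring R] {n : ℕ} (S : Finset (Face n)) (X : SShape R n) :
    Prop :=
  (∀ s ∈ S, fdim s = 2 → ∀ i j : Fin n, i ≠ j → s i = 1 → s j = 1 →
      sqComp X s i = sqComp X s j ∨ sqComp X s i = -sqComp X s j) ∧
  (∀ u₀ u₁ u₂ u₃ : Face n, EdgePair S u₀ u₁ → EdgePair S u₁ u₂ → EdgePair S u₂ u₃ →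
      (2 : ℕ) • ((X.d u₂ u₃).comp ((X.d u₁ u₂).comp (X.d u₀ u₁))) ≠ 0)


section Aux

variable {n : ℕ}

lemma fin3_cases (a : Fin 3) : a = 0 ∨ a = 1 ∨ a = 2 := by omega

/-- `c` with `i→a`, `j→b`, `k→d`, all other stars set to `0`. -/
def Vtx (c : Face n) (i j k : Fin n) (a b d : Fin 3) : Face n :=
  Function.update (Function.update (Function.update (vset c 0) i a) j b) k d

lemma fdim_update (f : Face n) (m : Fin n) (a : Fin 3) (hm : f m = 1) (ha : a ≠ 1) :
    fdim (Function.update f m a) = fdim f - 1 := by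
  unfold fdim
  have h1 : (Finset.univ.filter fun l => Function.update f m a l = 1)
      = (Finset.univ.filter fun l => f l = 1).erase m := by
    ext l
    rcases eq_or_ne l m with rfl | hl
    · simp [Function.update_self, ha]
    · simp [Function.update_of_ne hl, hl]
  rw [h1, Finset.card_erase_of_mem (by simp [hm])]

end Aux

section Aux2
variable {n : ℕ} {c : Face n} {i j k : Fin n}
variable (hij : i ≠ j) (hik : i ≠ k) (hjk : j ≠ k)
variable (hci : c i = 1) (hcj : c j = 1) (hck : c k = 1)
variable (hst : ∀ l, c l = 1 → l = i ∨ l = j ∨ l = k)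

lemma Vtx_apply (a b d : Fin 3) (l : Fin n) :
    Vtx c i j k a b d l =
      if l = k then d else if l = j then b else if l = i then a
      else if c l = 1 then 0 else c l := by
  simp [Vtx, Function.update_apply, vset]

include hij hik hjk hci hcj hck hst in
lemma vset_upd_k (d' a : Fin 3) (hd' : d' ≠ 1) (ha : a ≠ 1) :
    vset (Function.update c k d') a = Vtx c i j k a a d' := by
  funext l
  rw [Vtx_apply]
  simp only [vset, Function.update_apply]
  rcases eq_or_ne l k with rfl | hlk
  · simp [hd']
  · rcases eq_or_ne l j with rfl | hlj
    · simp [hlk, hcj]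
    · rcases eq_or_ne l i with rfl | hli
      · simp [hlk, hci]
      · have : c l ≠ 1 := fun h => by rcases hst l h with h|h|h <;> simp_all
        simp [hlk, hlj, hli, this]

include hij hik hjk hci hcj hck hst in
lemma vset_upd_j (b' a : Fin 3) (hb' : b' ≠ 1) (ha : a ≠ 1) :
    vset (Function.update c j b') a = Vtx c i j k a b' a := by
  funext l
  rw [Vtx_apply]
  simp only [vset, Function.update_apply]
  rcases eq_or_ne l k with rfl | hlk
  · simp [hjk.symm, hck, (Ne.symm hjk)]
  · rcases eq_or_ne l j with rfl | hlj
    · simp [hb', hlk]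
    · rcases eq_or_ne l i with rfl | hli
      · simp [hci, hlk, hlj]
      · have : c l ≠ 1 := fun h => by rcases hst l h with h|h|h <;> simp_all
        simp [hlk, hlj, hli, this]

include hij hik hjk hci hcj hck hst in
lemma vset_upd_i (a' a : Fin 3) (ha' : a' ≠ 1) (ha : a ≠ 1) :
    vset (Function.update c i a') a = Vtx c i j k a' a a := by
  funext l
  rw [Vtx_apply]
  simp only [vset, Function.update_apply]
  rcases eq_or_ne l k with rfl | hlk
  · simp [Ne.symm hik, hck]
  · rcases eq_or_ne l j with rfl | hlj
    · simp [Ne.symm hij, hcj, hlk]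
    · rcases eq_or_ne l i with rfl | hli
      · simp [ha', hlk, hlj]
      · have : c l ≠ 1 := fun h => by rcases hst l h with h|h|h <;> simp_all
        simp [hlk, hlj, hli, this]

include hij hik in
lemma upd_Vtx_i (a b d a' : Fin 3) :
    Function.update (Vtx c i j k a b d) i a' = Vtx c i j k a' b d := by
  funext l
  rw [Function.update_apply, Vtx_apply, Vtx_apply]
  rcases eq_or_ne l i with rfl | hli
  · simp [hik, hij]
  · simp [hli]

include hij hjk in
lemma upd_Vtx_j (a b d b' : Fin 3) :
    Function.update (Vtx c i j k a b d) j b' = Vtx c i j k a b' d := by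
  funext l
  rw [Function.update_apply, Vtx_apply, Vtx_apply]
  rcases eq_or_ne l j with rfl | hlj
  · simp [hjk, Ne.symm hij]
  · simp [hlj]

lemma upd_Vtx_k (a b d d' : Fin 3) :
    Function.update (Vtx c i j k a b d) k d' = Vtx c i j k a b d' := by
  funext l
  rw [Function.update_apply, Vtx_apply, Vtx_apply]
  rcases eq_or_ne l k with rfl | hlk
  · simp
  · simp [hlk]

end Aux2

section Aux3
variable {n : ℕ} {c : Face n} {i j k : Fin n}
variable (hij : i ≠ j) (hik : i ≠ k) (hjk : j ≠ k)
variable (hci : c i = 1) (hcj : c j = 1) (hck : c k = 1)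
variable (hst : ∀ l, c l = 1 → l = i ∨ l = j ∨ l = k)

include hij hik hjk hci hcj hck hst in
lemma vset_upd_jk (b' d' a : Fin 3) (hb' : b' ≠ 1) (hd' : d' ≠ 1) (ha : a ≠ 1) :
    vset (Function.update (Function.update c j b') k d') a = Vtx c i j k a b' d' := by
  funext l
  rw [Vtx_apply]
  simp only [vset, Function.update_apply]
  rcases eq_or_ne l k with rfl | hlk
  · simp [hd']
  · rcases eq_or_ne l j with rfl | hlj
    · simp [hlk, hb']
    · rcases eq_or_ne l i with rfl | hli
      · simp [hlk, hlj, hci]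
      · have : c l ≠ 1 := fun h => by rcases hst l h with h|h|h <;> simp_all
        simp [hlk, hlj, hli, this]

include hij hik hjk hci hcj hck hst in
lemma vset_upd_ik (a' d' a : Fin 3) (ha' : a' ≠ 1) (hd' : d' ≠ 1) (ha : a ≠ 1) :
    vset (Function.update (Function.update c i a') k d') a = Vtx c i j k a' a d' := by
  funext l
  rw [Vtx_apply]
  simp only [vset, Function.update_apply]
  rcases eq_or_ne l k with rfl | hlk
  · simp [hd']
  · rcases eq_or_ne l j with rfl | hlj
    · simp [hlk, Ne.symm hij, hcj]
    · rcases eq_or_ne l i with rfl | hli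
      · simp [hlk, hlj, ha']
      · have : c l ≠ 1 := fun h => by rcases hst l h with h|h|h <;> simp_all
        simp [hlk, hlj, hli, this]

include hij hik hjk hci hcj hck hst in
lemma vset_upd_ij (a' b' a : Fin 3) (ha' : a' ≠ 1) (hb' : b' ≠ 1) (ha : a ≠ 1) :
    vset (Function.update (Function.update c i a') j b') a = Vtx c i j k a' b' a := by
  funext l
  rw [Vtx_apply]
  simp only [vset, Function.update_apply]
  rcases eq_or_ne l k with rfl | hlk
  · simp [Ne.symm hjk, Ne.symm hik, hck]
  · rcases eq_or_ne l j with rfl | hlj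
    · simp [hlk, hb']
    · rcases eq_or_ne l i with rfl | hli
      · simp [hlk, hlj, ha']
      · have : c l ≠ 1 := fun h => by rcases hst l h with h|h|h <;> simp_all
        simp [hlk, hlj, hli, this]

end Aux3

section Aux4
variable {R : Type*} [Ring R] {n : ℕ}

lemma comp_zsmul' {A B C : Type*} [AddCommGroup A] [AddCommGroup B] [AddCommGroup C]
    [Module R A] [Module R B] [Module R C] (m : ℤ) (f : B →ₗ[R] C) (g : A →ₗ[R] B) :
    f.comp (m • g) = m • f.comp g := by
  ext x; simp

lemma zsmul_comp' {A B C : Type*} [AddCommGroup A] [AddCommGroup B] [AddCommGroup C]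
    [Module R A] [Module R B] [Module R C] (m : ℤ) (f : B →ₗ[R] C) (g : A →ₗ[R] B) :
    (m • f).comp g = m • f.comp g := by
  ext x; simp

/-- the two star positions of a square are unique up to order -/
lemma square_pair {s : Face n} (h2 : fdim s = 2) {i j : Fin n} (hij : i ≠ j)
    (hi : s i = 1) (hj : s j = 1) :
    ∀ a b : Fin n, a ≠ b → s a = 1 → s b = 1 → (a = i ∧ b = j) ∨ (a = j ∧ b = i) := by
  have hsub : ({i, j} : Finset (Fin n)) ⊆ Finset.univ.filter fun l => s l = 1 := by
    intro x hx
    rcases Finset.mem_insert.1 hx with rfl | hx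
    · simp [hi]
    · rw [Finset.mem_singleton] at hx; subst hx; simp [hj]
  have hcard : ({i, j} : Finset (Fin n)).card = 2 := by
    rw [Finset.card_insert_of_notMem (by simp [hij]), Finset.card_singleton]
  have heq : (Finset.univ.filter fun l => s l = 1) = {i, j} :=
    (Finset.eq_of_subset_of_card_le hsub (by rw [hcard]; unfold fdim at h2; omega)).symm
  intro a b hab ha hb
  have ha' : a ∈ ({i, j} : Finset (Fin n)) := by rw [← heq]; simp [ha]
  have hb' : b ∈ ({i, j} : Finset (Fin n)) := by rw [← heq]; simp [hb]
  simp only [Finset.mem_insert, Finset.mem_singleton] at ha' hb'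
  rcases ha' with rfl | rfl <;> rcases hb' with rfl | rfl <;> simp_all

lemma sq_sign {S : Finset (Face n)} {X : SShape R n}
    (hX1 : ∀ s ∈ S, fdim s = 2 → ∀ i j : Fin n, i ≠ j → s i = 1 → s j = 1 →
      sqComp X s i = sqComp X s j ∨ sqComp X s i = -sqComp X s j)
    {γ : Face n → ZMod 2}
    (hγ : ∀ s ∈ S, fdim s = 2 →
      (((∀ i j : Fin n, i ≠ j → s i = 1 → s j = 1 → sqComp X s i = sqComp X s j) →
          γ s = 1) ∧
        ((¬ ∀ i j : Fin n, i ≠ j → s i = 1 → s j = 1 → sqComp X s i = sqComp X s j) →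
          γ s = 0)))
    {s : Face n} (hs : s ∈ S) (h2 : fdim s = 2) {i j : Fin n} (hij : i ≠ j)
    (hi : s i = 1) (hj : s j = 1) :
    sqComp X s i = (if γ s = 1 then (1 : ℤ) else -1) • sqComp X s j := by
  by_cases hcomm : sqComp X s i = sqComp X s j
  · have hall : ∀ a b : Fin n, a ≠ b → s a = 1 → s b = 1 → sqComp X s a = sqComp X s b := by
      intro a b hab ha hb
      rcases square_pair h2 hij hi hj a b hab ha hb with ⟨rfl, rfl⟩ | ⟨rfl, rfl⟩
      · exact hcomm
      · exact hcomm.symm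
    rw [(hγ s hs h2).1 hall]
    simpa using hcomm
  · have h0 : γ s = 0 := (hγ s hs h2).2 (fun hall => hcomm (hall i j hij hi hj))
    rcases hX1 s hs h2 i j hij hi hj with h | h
    · exact absurd h hcomm
    · rw [h0]
      simpa using h

/-- from a relation with sign ±1, the reversed relation -/
lemma sign_rev {A B : Type*} [AddCommGroup A] [AddCommGroup B] [Module R A] [Module R B]
    {f g : A →ₗ[R] B} {e : ℤ} (he : e = 1 ∨ e = -1) (h : f = e • g) : g = e • f := by
  rcases he with rfl | rfl <;> simp [h]

end Aux4

section Aux5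
variable {n : ℕ}

/-- every face of a strong-inductive set lies below a vertex of the set -/
lemma exists_vertex_above {S : Finset (Face n)} (hS : StrongInductive S) :
    ∀ f ∈ S, ∃ v ∈ S, (∀ l, v l ≠ 1) ∧ ∀ l, f l ≤ v l := by
  obtain ⟨hInd, hMax⟩ := hS
  have key : ∀ m : ℕ, ∀ f, f ∈ S → (∑ l, (2 - (f l : ℕ))) ≤ m →
      ∃ v ∈ S, (∀ l, v l ≠ 1) ∧ ∀ l, f l ≤ v l := by
    intro m
    induction m using Nat.strong_induction_on with
    | _ m ih =>
      intro f hf hm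
      by_cases h1 : ∀ l, f l ≠ 1
      · exact ⟨f, hf, h1, fun l => le_refl _⟩
      · push_neg at h1
        obtain ⟨l0, hl0⟩ := h1
        have hdim : fdim f ≠ 0 := by
          unfold fdim
          rw [Finset.card_ne_zero]
          exact ⟨l0, by simp [hl0]⟩
        have hnmax : ¬ (∀ g ∈ S, (∀ i, f i ≤ g i) → g = f) := fun h => hdim (hMax f hf h)
        push_neg at hnmax
        obtain ⟨g, hg, hge, hgne⟩ := hnmax
        have hlt : (∑ l, (2 - (g l : ℕ))) < (∑ l, (2 - (f l : ℕ))) := by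
          obtain ⟨l1, hl1⟩ : ∃ l1, g l1 ≠ f l1 := by
            by_contra h; push_neg at h; exact hgne (funext h)
          apply Finset.sum_lt_sum
          · intro l _
            have := hge l
            rw [Fin.le_def] at this
            omega
          · refine ⟨l1, Finset.mem_univ _, ?_⟩
            have h1 := hge l1
            rw [Fin.le_def] at h1
            have h2 : (g l1 : ℕ) ≤ 2 := by omega
            have h3 : (g l1 : ℕ) ≠ (f l1 : ℕ) := fun h => hl1 (Fin.ext h)
            omega
        obtain ⟨v, hv, hv1, hv2⟩ := ih _ (lt_of_lt_of_le hlt hm) g hg (le_refl _)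
        exact ⟨v, hv, hv1, fun l => le_trans (hge l) (hv2 l)⟩
  intro f hf
  exact key _ f hf (le_refl _)

lemma upd_ne_same {c : Face n} {m : Fin n} {a a' : Fin 3} (h : a ≠ a') :
    Function.update c m a ≠ Function.update c m a' := fun hh => by
  have := congrFun hh m; simp at this; exact h this

lemma upd_ne_diff {c : Face n} {m m' : Fin n} {a a' : Fin 3} (hmm : m ≠ m')
    (hc : c m = 1) (ha : a ≠ 1) : Function.update c m a ≠ Function.update c m' a' :=
  fun hh => by
  have := congrFun hh m
  rw [Function.update_self, Function.update_of_ne hmm, hc] at this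
  exact ha this

lemma parity_key : ∀ g1 g2 g3 g4 g5 g6 : ZMod 2,
    ((if g1 = 1 then (1:ℤ) else -1) * (if g2 = 1 then (1:ℤ) else -1) *
     (if g3 = 1 then (1:ℤ) else -1) * (if g4 = 1 then (1:ℤ) else -1) *
     (if g5 = 1 then (1:ℤ) else -1) * (if g6 = 1 then (1:ℤ) else -1) = 1 →
      g1 + g2 + g3 + g4 + g5 + g6 = 0) ∧
    ((if g1 = 1 then (1:ℤ) else -1) * (if g2 = 1 then (1:ℤ) else -1) *
     (if g3 = 1 then (1:ℤ) else -1) * (if g4 = 1 then (1:ℤ) else -1) *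
     (if g5 = 1 then (1:ℤ) else -1) * (if g6 = 1 then (1:ℤ) else -1) = 1 ∨
     (if g1 = 1 then (1:ℤ) else -1) * (if g2 = 1 then (1:ℤ) else -1) *
     (if g3 = 1 then (1:ℤ) else -1) * (if g4 = 1 then (1:ℤ) else -1) *
     (if g5 = 1 then (1:ℤ) else -1) * (if g6 = 1 then (1:ℤ) else -1) = -1) := by
  decide

end Aux5

set_option maxHeartbeats 1000000 in
/-- For an `S`-shaped pre-complex over a strong-inductive cubical set `S`, the function `γ`
on squares defined by `γ(s) = 1` if `s` commutes and `γ(s) = 0` otherwise is a 2-cocycle of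
the dual complex of `S`: for every cube `c` of `S`, the sum of `γ` over the six square
faces of `c` (the faces appearing in `∂c`) vanishes in `ℤ/2ℤ`. -/
theorem statement8 {R : Type*} [Ring R] {n : ℕ} (S : Finset (Face n))
    (hS : StrongInductive S) (X : SShape R n) (hX : IsPreComplex S X)
    (γ : Face n → ZMod 2)
    (hγ : ∀ s ∈ S, fdim s = 2 →
      (((∀ i j : Fin n, i ≠ j → s i = 1 → s j = 1 → sqComp X s i = sqComp X s j) →
          γ s = 1) ∧
        ((¬ ∀ i j : Fin n, i ≠ j → s i = 1 → s j = 1 → sqComp X s i = sqComp X s j) →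
          γ s = 0))) :
    ∀ c ∈ S, fdim c = 3 → (∑ s ∈ Finset.univ.filter (fun g => Adj c g), γ s) = 0 := by
  intro c hc hdim
  obtain ⟨i, j, k, hij, hik, hjk, hfil⟩ := Finset.card_eq_three.1 hdim
  have hci : c i = 1 := by
    have : i ∈ Finset.univ.filter fun l => c l = 1 := by rw [hfil]; simp
    simpa using this
  have hcj : c j = 1 := by
    have : j ∈ Finset.univ.filter fun l => c l = 1 := by rw [hfil]; simp
    simpa using this
  have hck : c k = 1 := by
    have : k ∈ Finset.univ.filter fun l => c l = 1 := by rw [hfil]; simp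
    simpa using this
  have hst : ∀ l, c l = 1 → l = i ∨ l = j ∨ l = k := by
    intro l hl
    have : l ∈ Finset.univ.filter fun l => c l = 1 := by simp [hl]
    rw [hfil] at this; simpa using this
  obtain ⟨v, hvS, hv1, hvge⟩ := exists_vertex_above hS c hc
  have hv2 : ∀ l, c l = 1 → v l = 2 := by
    intro l hl
    have h1 := hvge l
    have h2 := hv1 l
    rw [Fin.le_def] at h1
    rw [hl] at h1
    have h3 : (v l : ℕ) < 3 := (v l).isLt
    rcases fin3_cases (v l) with h|h|h
    · rw [h] at h1; simp at h1
    · exact absurd h h2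
    · exact h
  have hle0 : ∀ x : Fin 3, (0 : Fin 3) ≤ x := by decide
  have memS : ∀ f : Face n, (∀ l, f l ≤ c l ∨ (c l = 1 ∧ f l = 2)) → f ∈ S := by
    intro f hf
    apply hS.1 v hvS
    intro l
    rcases hf l with h | ⟨h1, h2⟩
    · exact le_trans h (hvge l)
    · rw [h2, hv2 l h1]
  have memS1 : ∀ (m : Fin n) (a : Fin 3), c m = 1 → (a = 0 ∨ a = 2) →
      Function.update c m a ∈ S := by
    intro m a hcm ha
    apply memS
    intro l
    rw [Function.update_apply]
    rcases eq_or_ne l m with rfl | h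
    · simp only [if_pos rfl]
      rcases ha with rfl | rfl
      · exact Or.inl (hle0 _)
      · exact Or.inr ⟨hcm, rfl⟩
    · rw [if_neg h]; exact Or.inl (le_refl _)
  have memS2 : ∀ (m m' : Fin n) (a a' : Fin 3), m' ≠ m → c m = 1 → (a = 0 ∨ a = 2) →
      (a' = 0 ∨ (a' = 2 ∧ c m' = 1)) →
      Function.update (Function.update c m a) m' a' ∈ S := by
    intro m m' a a' hmm hcm ha ha'
    apply memS
    intro l
    rw [Function.update_apply, Function.update_apply]
    rcases eq_or_ne l m' with rfl | h1
    · simp only [if_pos rfl]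
      rcases ha' with rfl | ⟨rfl, h2⟩
      · exact Or.inl (hle0 _)
      · exact Or.inr ⟨h2, rfl⟩
    · rw [if_neg h1]
      rcases eq_or_ne l m with rfl | h2
      · simp only [if_pos rfl]
        rcases ha with rfl | rfl
        · exact Or.inl (hle0 _)
        · exact Or.inr ⟨hcm, rfl⟩
      · rw [if_neg h2]; exact Or.inl (le_refl _)
  have fdsq : ∀ (m : Fin n) (a : Fin 3), c m = 1 → a ≠ 1 →
      fdim (Function.update c m a) = 2 := by
    intro m a hm ha
    rw [fdim_update c m a hm ha, hdim]
  have fde : ∀ (m m' : Fin n) (a a' : Fin 3), m' ≠ m → c m = 1 → c m' = 1 → a ≠ 1 →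
      a' ≠ 1 → fdim (Function.update (Function.update c m a) m' a') = 1 := by
    intro m m' a a' hmm hcm hcm' ha ha'
    rw [fdim_update _ m' a' (by rw [Function.update_of_ne hmm]; exact hcm') ha',
      fdim_update c m a hcm ha, hdim]
  -- the six squares
  set Ei0 := (if γ (Function.update c i 0) = 1 then (1 : ℤ) else -1) with hEi0
  set Ei2 := (if γ (Function.update c i 2) = 1 then (1 : ℤ) else -1) with hEi2
  set Ej0 := (if γ (Function.update c j 0) = 1 then (1 : ℤ) else -1) with hEj0
  set Ej2 := (if γ (Function.update c j 2) = 1 then (1 : ℤ) else -1) with hEj2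
  set Ek0 := (if γ (Function.update c k 0) = 1 then (1 : ℤ) else -1) with hEk0
  set Ek2 := (if γ (Function.update c k 2) = 1 then (1 : ℤ) else -1) with hEk2
  have hEchoice : ∀ x : ZMod 2, (if x = 1 then (1 : ℤ) else -1) = 1 ∨
      (if x = 1 then (1 : ℤ) else -1) = -1 := by decide
  -- square k0
  have Rk0 := sq_sign hX.1 hγ (memS1 k 0 hck (Or.inl rfl)) (fdsq k 0 hck (by decide)) hij
    (by rw [Function.update_of_ne hik]; exact hci)
    (by rw [Function.update_of_ne hjk]; exact hcj)
  have cA : vset (Function.update c k 0) 0 = (Vtx c i j k 0 0 0) :=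
    vset_upd_k hij hik hjk hci hcj hck hst 0 0 (by decide) (by decide)
  have cB : vset (Function.update c k 0) 2 = (Vtx c i j k 2 2 0) :=
    vset_upd_k hij hik hjk hci hcj hck hst 0 2 (by decide) (by decide)
  have cC : corner0 (Function.update c k 0) i 2 = (Vtx c i j k 2 0 0) := by
    unfold corner0; rw [cA]; exact upd_Vtx_i hij hik 0 0 0 2
  have cD : corner0 (Function.update c k 0) j 2 = (Vtx c i j k 0 2 0) := by
    unfold corner0; rw [cA]; exact upd_Vtx_j hij hjk 0 0 0 2
  simp only [sqComp] at Rk0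
  rw [cA, cB, cC, cD, ← hEk0] at Rk0
  -- square k2
  have Rk2 := sq_sign hX.1 hγ (memS1 k 2 hck (Or.inr rfl)) (fdsq k 2 hck (by decide)) hij
    (by rw [Function.update_of_ne hik]; exact hci)
    (by rw [Function.update_of_ne hjk]; exact hcj)
  have cA2 : vset (Function.update c k 2) 0 = (Vtx c i j k 0 0 2) :=
    vset_upd_k hij hik hjk hci hcj hck hst 2 0 (by decide) (by decide)
  have cB2 : vset (Function.update c k 2) 2 = (Vtx c i j k 2 2 2) :=
    vset_upd_k hij hik hjk hci hcj hck hst 2 2 (by decide) (by decide)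
  have cC2 : corner0 (Function.update c k 2) i 2 = (Vtx c i j k 2 0 2) := by
    unfold corner0; rw [cA2]; exact upd_Vtx_i hij hik 0 0 2 2
  have cD2 : corner0 (Function.update c k 2) j 2 = (Vtx c i j k 0 2 2) := by
    unfold corner0; rw [cA2]; exact upd_Vtx_j hij hjk 0 0 2 2
  simp only [sqComp] at Rk2
  rw [cA2, cB2, cC2, cD2, ← hEk2] at Rk2
  -- square j0 (pair (i,k))
  have Rj0 := sq_sign hX.1 hγ (memS1 j 0 hcj (Or.inl rfl)) (fdsq j 0 hcj (by decide)) hik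
    (by rw [Function.update_of_ne hij]; exact hci)
    (by rw [Function.update_of_ne (Ne.symm hjk)]; exact hck)
  have cA3 : vset (Function.update c j 0) 0 = (Vtx c i j k 0 0 0) :=
    vset_upd_j hij hik hjk hci hcj hck hst 0 0 (by decide) (by decide)
  have cB3 : vset (Function.update c j 0) 2 = (Vtx c i j k 2 0 2) :=
    vset_upd_j hij hik hjk hci hcj hck hst 0 2 (by decide) (by decide)
  have cC3 : corner0 (Function.update c j 0) i 2 = (Vtx c i j k 2 0 0) := by
    unfold corner0; rw [cA3]; exact upd_Vtx_i hij hik 0 0 0 2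
  have cD3 : corner0 (Function.update c j 0) k 2 = (Vtx c i j k 0 0 2) := by
    unfold corner0; rw [cA3]; exact upd_Vtx_k 0 0 0 2
  simp only [sqComp] at Rj0
  rw [cA3, cB3, cC3, cD3, ← hEj0] at Rj0
  -- square j2 (pair (i,k))
  have Rj2 := sq_sign hX.1 hγ (memS1 j 2 hcj (Or.inr rfl)) (fdsq j 2 hcj (by decide)) hik
    (by rw [Function.update_of_ne hij]; exact hci)
    (by rw [Function.update_of_ne (Ne.symm hjk)]; exact hck)
  have cA4 : vset (Function.update c j 2) 0 = (Vtx c i j k 0 2 0) :=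
    vset_upd_j hij hik hjk hci hcj hck hst 2 0 (by decide) (by decide)
  have cB4 : vset (Function.update c j 2) 2 = (Vtx c i j k 2 2 2) :=
    vset_upd_j hij hik hjk hci hcj hck hst 2 2 (by decide) (by decide)
  have cC4 : corner0 (Function.update c j 2) i 2 = (Vtx c i j k 2 2 0) := by
    unfold corner0; rw [cA4]; exact upd_Vtx_i hij hik 0 2 0 2
  have cD4 : corner0 (Function.update c j 2) k 2 = (Vtx c i j k 0 2 2) := by
    unfold corner0; rw [cA4]; exact upd_Vtx_k 0 2 0 2
  simp only [sqComp] at Rj2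
  rw [cA4, cB4, cC4, cD4, ← hEj2] at Rj2
  -- square i0 (pair (j,k))
  have Ri0 := sq_sign hX.1 hγ (memS1 i 0 hci (Or.inl rfl)) (fdsq i 0 hci (by decide)) hjk
    (by rw [Function.update_of_ne (Ne.symm hij)]; exact hcj)
    (by rw [Function.update_of_ne (Ne.symm hik)]; exact hck)
  have cA5 : vset (Function.update c i 0) 0 = (Vtx c i j k 0 0 0) :=
    vset_upd_i hij hik hjk hci hcj hck hst 0 0 (by decide) (by decide)
  have cB5 : vset (Function.update c i 0) 2 = (Vtx c i j k 0 2 2) :=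
    vset_upd_i hij hik hjk hci hcj hck hst 0 2 (by decide) (by decide)
  have cC5 : corner0 (Function.update c i 0) j 2 = (Vtx c i j k 0 2 0) := by
    unfold corner0; rw [cA5]; exact upd_Vtx_j hij hjk 0 0 0 2
  have cD5 : corner0 (Function.update c i 0) k 2 = (Vtx c i j k 0 0 2) := by
    unfold corner0; rw [cA5]; exact upd_Vtx_k 0 0 0 2
  simp only [sqComp] at Ri0
  rw [cA5, cB5, cC5, cD5, ← hEi0] at Ri0
  -- square i2 (pair (j,k))
  have Ri2 := sq_sign hX.1 hγ (memS1 i 2 hci (Or.inr rfl)) (fdsq i 2 hci (by decide)) hjk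
    (by rw [Function.update_of_ne (Ne.symm hij)]; exact hcj)
    (by rw [Function.update_of_ne (Ne.symm hik)]; exact hck)
  have cA6 : vset (Function.update c i 2) 0 = (Vtx c i j k 2 0 0) :=
    vset_upd_i hij hik hjk hci hcj hck hst 2 0 (by decide) (by decide)
  have cB6 : vset (Function.update c i 2) 2 = (Vtx c i j k 2 2 2) :=
    vset_upd_i hij hik hjk hci hcj hck hst 2 2 (by decide) (by decide)
  have cC6 : corner0 (Function.update c i 2) j 2 = (Vtx c i j k 2 2 0) := by
    unfold corner0; rw [cA6]; exact upd_Vtx_j hij hjk 2 0 0 2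
  have cD6 : corner0 (Function.update c i 2) k 2 = (Vtx c i j k 2 0 2) := by
    unfold corner0; rw [cA6]; exact upd_Vtx_k 2 0 0 2
  simp only [sqComp] at Ri2
  rw [cA6, cB6, cC6, cD6, ← hEi2] at Ri2
  -- reversed relations
  have Ri0rev := sign_rev (hEi0 ▸ hEchoice (γ (Function.update c i 0))) Ri0
  have Rj2rev := sign_rev (hEj2 ▸ hEchoice (γ (Function.update c j 2))) Rj2
  have Rk0rev := sign_rev (hEk0 ▸ hEchoice (γ (Function.update c k 0))) Rk0
  -- the hexagon chain
  have step1 : (X.d (Vtx c i j k 2 2 0) (Vtx c i j k 2 2 2)).comp ((X.d (Vtx c i j k 2 0 0) (Vtx c i j k 2 2 0)).comp (X.d (Vtx c i j k 0 0 0) (Vtx c i j k 2 0 0))) =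
      Ei2 • ((X.d (Vtx c i j k 2 0 2) (Vtx c i j k 2 2 2)).comp ((X.d (Vtx c i j k 2 0 0) (Vtx c i j k 2 0 2)).comp (X.d (Vtx c i j k 0 0 0) (Vtx c i j k 2 0 0)))) := by
    conv_lhs => rw [← LinearMap.comp_assoc, Ri2, zsmul_comp', LinearMap.comp_assoc]
  have step2 : (X.d (Vtx c i j k 2 0 2) (Vtx c i j k 2 2 2)).comp ((X.d (Vtx c i j k 2 0 0) (Vtx c i j k 2 0 2)).comp (X.d (Vtx c i j k 0 0 0) (Vtx c i j k 2 0 0))) =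
      Ej0 • ((X.d (Vtx c i j k 2 0 2) (Vtx c i j k 2 2 2)).comp ((X.d (Vtx c i j k 0 0 2) (Vtx c i j k 2 0 2)).comp (X.d (Vtx c i j k 0 0 0) (Vtx c i j k 0 0 2)))) := by
    conv_lhs => rw [Rj0, comp_zsmul']
  have step3 : (X.d (Vtx c i j k 2 0 2) (Vtx c i j k 2 2 2)).comp ((X.d (Vtx c i j k 0 0 2) (Vtx c i j k 2 0 2)).comp (X.d (Vtx c i j k 0 0 0) (Vtx c i j k 0 0 2))) =
      Ek2 • ((X.d (Vtx c i j k 0 2 2) (Vtx c i j k 2 2 2)).comp ((X.d (Vtx c i j k 0 0 2) (Vtx c i j k 0 2 2)).comp (X.d (Vtx c i j k 0 0 0) (Vtx c i j k 0 0 2)))) := by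
    conv_lhs => rw [← LinearMap.comp_assoc, Rk2, zsmul_comp', LinearMap.comp_assoc]
  have step4 : (X.d (Vtx c i j k 0 2 2) (Vtx c i j k 2 2 2)).comp ((X.d (Vtx c i j k 0 0 2) (Vtx c i j k 0 2 2)).comp (X.d (Vtx c i j k 0 0 0) (Vtx c i j k 0 0 2))) =
      Ei0 • ((X.d (Vtx c i j k 0 2 2) (Vtx c i j k 2 2 2)).comp ((X.d (Vtx c i j k 0 2 0) (Vtx c i j k 0 2 2)).comp (X.d (Vtx c i j k 0 0 0) (Vtx c i j k 0 2 0)))) := by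
    conv_lhs => rw [Ri0rev, comp_zsmul']
  have step5 : (X.d (Vtx c i j k 0 2 2) (Vtx c i j k 2 2 2)).comp ((X.d (Vtx c i j k 0 2 0) (Vtx c i j k 0 2 2)).comp (X.d (Vtx c i j k 0 0 0) (Vtx c i j k 0 2 0))) =
      Ej2 • ((X.d (Vtx c i j k 2 2 0) (Vtx c i j k 2 2 2)).comp ((X.d (Vtx c i j k 0 2 0) (Vtx c i j k 2 2 0)).comp (X.d (Vtx c i j k 0 0 0) (Vtx c i j k 0 2 0)))) := by
    conv_lhs => rw [← LinearMap.comp_assoc, Rj2rev, zsmul_comp', LinearMap.comp_assoc]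
  have step6 : (X.d (Vtx c i j k 2 2 0) (Vtx c i j k 2 2 2)).comp ((X.d (Vtx c i j k 0 2 0) (Vtx c i j k 2 2 0)).comp (X.d (Vtx c i j k 0 0 0) (Vtx c i j k 0 2 0))) =
      Ek0 • ((X.d (Vtx c i j k 2 2 0) (Vtx c i j k 2 2 2)).comp ((X.d (Vtx c i j k 2 0 0) (Vtx c i j k 2 2 0)).comp (X.d (Vtx c i j k 0 0 0) (Vtx c i j k 2 0 0)))) := by
    conv_lhs => rw [Rk0rev, comp_zsmul']
  have hchain : (X.d (Vtx c i j k 2 2 0) (Vtx c i j k 2 2 2)).comp ((X.d (Vtx c i j k 2 0 0) (Vtx c i j k 2 2 0)).comp (X.d (Vtx c i j k 0 0 0) (Vtx c i j k 2 0 0))) =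
      (Ei2 * Ej0 * Ek2 * Ei0 * Ej2 * Ek0) •
        ((X.d (Vtx c i j k 2 2 0) (Vtx c i j k 2 2 2)).comp ((X.d (Vtx c i j k 2 0 0) (Vtx c i j k 2 2 0)).comp (X.d (Vtx c i j k 0 0 0) (Vtx c i j k 2 0 0)))) := by
    conv_lhs => rw [step1, step2, step3, step4, step5, step6]
    simp only [smul_smul, mul_assoc]
  -- edge pairs
  have ep1 : EdgePair S (Vtx c i j k 0 0 0) (Vtx c i j k 2 0 0) := by
    refine ⟨Function.update (Function.update c j 0) k 0,
      memS2 j k 0 0 (Ne.symm hjk) hcj (Or.inl rfl) (Or.inl rfl),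
      fde j k 0 0 (Ne.symm hjk) hcj hck (by decide) (by decide), ?_, ?_⟩
    · exact vset_upd_jk hij hik hjk hci hcj hck hst 0 0 0 (by decide) (by decide) (by decide)
    · exact vset_upd_jk hij hik hjk hci hcj hck hst 0 0 2 (by decide) (by decide) (by decide)
  have ep2 : EdgePair S (Vtx c i j k 2 0 0) (Vtx c i j k 2 2 0) := by
    refine ⟨Function.update (Function.update c i 2) k 0,
      memS2 i k 2 0 (Ne.symm hik) hci (Or.inr rfl) (Or.inl rfl),
      fde i k 2 0 (Ne.symm hik) hci hck (by decide) (by decide), ?_, ?_⟩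
    · exact vset_upd_ik hij hik hjk hci hcj hck hst 2 0 0 (by decide) (by decide) (by decide)
    · exact vset_upd_ik hij hik hjk hci hcj hck hst 2 0 2 (by decide) (by decide) (by decide)
  have ep3 : EdgePair S (Vtx c i j k 2 2 0) (Vtx c i j k 2 2 2) := by
    refine ⟨Function.update (Function.update c i 2) j 2,
      memS2 i j 2 2 (Ne.symm hij) hci (Or.inr rfl) (Or.inr ⟨rfl, hcj⟩),
      fde i j 2 2 (Ne.symm hij) hci hcj (by decide) (by decide), ?_, ?_⟩
    · exact vset_upd_ij hij hik hjk hci hcj hck hst 2 2 0 (by decide) (by decide) (by decide)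
    · exact vset_upd_ij hij hik hjk hci hcj hck hst 2 2 2 (by decide) (by decide) (by decide)
  -- the product of signs is 1
  have hpar := parity_key (γ (Function.update c i 2)) (γ (Function.update c j 0))
    (γ (Function.update c k 2)) (γ (Function.update c i 0)) (γ (Function.update c j 2))
    (γ (Function.update c k 0))
  rw [← hEi2, ← hEj0, ← hEk2, ← hEi0, ← hEj2, ← hEk0] at hpar
  have hprod : Ei2 * Ej0 * Ek2 * Ei0 * Ej2 * Ek0 = 1 := by
    rcases hpar.2 with h | h
    · exact h
    · exfalso
      rw [h] at hchain
      have h2 : (2 : ℕ) • ((X.d (Vtx c i j k 2 2 0) (Vtx c i j k 2 2 2)).comp ((X.d (Vtx c i j k 2 0 0) (Vtx c i j k 2 2 0)).comp (X.d (Vtx c i j k 0 0 0) (Vtx c i j k 2 0 0)))) = 0 := by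
        rw [two_nsmul]
        nth_rewrite 1 [hchain]
        rw [neg_smul, one_smul, neg_add_cancel]
      exact hX.2 (Vtx c i j k 0 0 0) (Vtx c i j k 2 0 0) (Vtx c i j k 2 2 0) (Vtx c i j k 2 2 2) ep1 ep2 ep3 h2
  have hsum := hpar.1 hprod
  -- compute the sum over the six faces
  have hfilter : Finset.univ.filter (fun g => Adj c g) =
      {Function.update c i 0, Function.update c i 2, Function.update c j 0,
        Function.update c j 2, Function.update c k 0, Function.update c k 2} := by
    ext g
    simp only [Finset.mem_filter, Finset.mem_univ, true_and, Finset.mem_insert,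
      Finset.mem_singleton]
    constructor
    · rintro ⟨m, hm1, hm2, hm3⟩
      have hg : g = Function.update c m (g m) := by
        funext l
        rcases eq_or_ne l m with rfl | h
        · simp
        · rw [Function.update_of_ne h]; exact hm3 l h
      rcases hst m hm1 with rfl | rfl | rfl
      · rcases fin3_cases (g m) with h | h | h
        · rw [hg, h]; exact Or.inl rfl
        · exact absurd h hm2
        · rw [hg, h]; exact Or.inr (Or.inl rfl)
      · rcases fin3_cases (g m) with h | h | h
        · rw [hg, h]; exact Or.inr (Or.inr (Or.inl rfl))
        · exact absurd h hm2
        · rw [hg, h]; exact Or.inr (Or.inr (Or.inr (Or.inl rfl)))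
      · rcases fin3_cases (g m) with h | h | h
        · rw [hg, h]; exact Or.inr (Or.inr (Or.inr (Or.inr (Or.inl rfl))))
        · exact absurd h hm2
        · rw [hg, h]; exact Or.inr (Or.inr (Or.inr (Or.inr (Or.inr rfl))))
    · rintro (rfl | rfl | rfl | rfl | rfl | rfl)
      · exact ⟨i, hci, by simp, fun l hl => Function.update_of_ne hl _ _⟩
      · exact ⟨i, hci, by simp, fun l hl => Function.update_of_ne hl _ _⟩
      · exact ⟨j, hcj, by simp, fun l hl => Function.update_of_ne hl _ _⟩
      · exact ⟨j, hcj, by simp, fun l hl => Function.update_of_ne hl _ _⟩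
      · exact ⟨k, hck, by simp, fun l hl => Function.update_of_ne hl _ _⟩
      · exact ⟨k, hck, by simp, fun l hl => Function.update_of_ne hl _ _⟩
  have m1 : Function.update c i 0 ≠ Function.update c i 2 := upd_ne_same (by decide)
  have m2 : Function.update c i 0 ≠ Function.update c j 0 := upd_ne_diff hij hci (by decide)
  have m3 : Function.update c i 0 ≠ Function.update c j 2 := upd_ne_diff hij hci (by decide)
  have m4 : Function.update c i 0 ≠ Function.update c k 0 := upd_ne_diff hik hci (by decide)
  have m5 : Function.update c i 0 ≠ Function.update c k 2 := upd_ne_diff hik hci (by decide)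
  have m6 : Function.update c i 2 ≠ Function.update c j 0 := upd_ne_diff hij hci (by decide)
  have m7 : Function.update c i 2 ≠ Function.update c j 2 := upd_ne_diff hij hci (by decide)
  have m8 : Function.update c i 2 ≠ Function.update c k 0 := upd_ne_diff hik hci (by decide)
  have m9 : Function.update c i 2 ≠ Function.update c k 2 := upd_ne_diff hik hci (by decide)
  have m10 : Function.update c j 0 ≠ Function.update c j 2 := upd_ne_same (by decide)
  have m11 : Function.update c j 0 ≠ Function.update c k 0 := upd_ne_diff hjk hcj (by decide)
  have m12 : Function.update c j 0 ≠ Function.update c k 2 := upd_ne_diff hjk hcj (by decide)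
  have m13 : Function.update c j 2 ≠ Function.update c k 0 := upd_ne_diff hjk hcj (by decide)
  have m14 : Function.update c j 2 ≠ Function.update c k 2 := upd_ne_diff hjk hcj (by decide)
  have m15 : Function.update c k 0 ≠ Function.update c k 2 := upd_ne_same (by decide)
  rw [hfilter]
  rw [Finset.sum_insert (by simp [m1, m2, m3, m4, m5]),
    Finset.sum_insert (by simp [m6, m7, m8, m9]),
    Finset.sum_insert (by simp [m10, m11, m12]),
    Finset.sum_insert (by simp [m13, m14]),
    Finset.sum_insert (by simp [m15]),
    Finset.sum_singleton]
  linear_combination hsum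
end

section
/- Let m, n ≥ 0 and let P₁, P₂ be compatible partitions of ε(m,n), with encodings f₁, f₂. If there exists a compatible partition P with f₁ ≤ f_P and f₂ ≤ f_P pointwise, then the pointwise maximum f₁ ∨ f₂ satisfies conditions (a) and (b), hence encodes a compatible partition P₁ ∨ P₂, and P₁ ∨ P₂ is the unique least upper bound of P₁ and P₂: f₁ ≤ f₁ ∨ f₂, f₂ ≤ f₁ ∨ f₂, and f₁ ∨ f₂ ≤ f_P for every compatible partition P with f₁ ≤ f_P and f₂ ≤ f_P. -/
/-- Encoding of compatible partitions of the colored dot sequence `ε(m,n)` (`m` dots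
colored `+` followed by `n` dots colored `−`): a function `f : ℕ → Bool` on the positions
`1, …, m+n−1` (with `f i = true` iff dots `i` and `i+1` lie in the same set) encodes a
compatible partition iff
(a) there is no `i` with `f i = f (i+1) = f (i+2) = true` (all positions in range), and
(b) if `f i = f (i+1) = true` then `i + 2 ≤ m` or `i ≥ m + 1`. -/
def Compat (m n : ℕ) (f : ℕ → Bool) : Prop :=
  (∀ i : ℕ, 1 ≤ i → i + 2 ≤ m + n - 1 →
    ¬(f i = true ∧ f (i + 1) = true ∧ f (i + 2) = true)) ∧
  (∀ i : ℕ, 1 ≤ i → i + 1 ≤ m + n - 1 → f i = true → f (i + 1) = true →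
    i + 2 ≤ m ∨ m + 1 ≤ i)

/-- The pointwise order (on the positions `1, …, m+n−1`) of encodings of partitions. -/
def Below (m n : ℕ) (f g : ℕ → Bool) : Prop :=
  ∀ i : ℕ, 1 ≤ i → i ≤ m + n - 1 → f i = true → g i = true

/-- If two compatible partitions `P₁`, `P₂` of `ε(m,n)` (with encodings `f₁`, `f₂`) admit a
common compatible upper bound, then the pointwise maximum `f₁ ∨ f₂` again satisfies
conditions (a) and (b), hence encodes a compatible partition `P₁ ∨ P₂`, and `P₁ ∨ P₂` is
the (unique) least upper bound of `P₁` and `P₂`. -/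
theorem statement13 (m n : ℕ) (f₁ f₂ : ℕ → Bool)
    (h₁ : Compat m n f₁) (h₂ : Compat m n f₂)
    (hub : ∃ g : ℕ → Bool, Compat m n g ∧ Below m n f₁ g ∧ Below m n f₂ g) :
    Compat m n (fun i => f₁ i || f₂ i) ∧
    Below m n f₁ (fun i => f₁ i || f₂ i) ∧
    Below m n f₂ (fun i => f₁ i || f₂ i) ∧
    (∀ g : ℕ → Bool, Compat m n g → Below m n f₁ g → Below m n f₂ g →
      Below m n (fun i => f₁ i || f₂ i) g) := by
  obtain ⟨g, hg, hg1, hg2⟩ := hub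
  have key : ∀ i, 1 ≤ i → i ≤ m + n - 1 → (f₁ i || f₂ i) = true → g i = true := by
    intro i h1 h2 h3
    rcases Bool.or_eq_true_iff.mp h3 with h | h
    · exact hg1 i h1 h2 h
    · exact hg2 i h1 h2 h
  refine ⟨⟨?_, ?_⟩, ?_, ?_, ?_⟩
  · intro i h1 h2 ⟨a, b, c⟩
    exact hg.1 i h1 h2 ⟨key i h1 (by omega) a, key (i+1) (by omega) (by omega) b,
      key (i+2) (by omega) (by omega) c⟩
  · intro i h1 h2 a b
    exact hg.2 i h1 h2 (key i h1 (by omega) a) (key (i+1) (by omega) (by omega) b)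
  · intro i _ _ h; simp [h]
  · intro i _ _ h; simp [h]
  · intro g' _ hb1 hb2 i h1 h2 h3
    rcases Bool.or_eq_true_iff.mp h3 with h | h
    · exact hb1 i h1 h2 h
    · exact hb2 i h1 h2 h
end
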